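/- arXiv:1511.03797 — 3 statements merged into one kernel-verified Lean document; each statement's English description precedes it below -/
import Mathlib

section
/- Let R be a commutative ring, n ≥ 1, S ⊆ {1,…,n}. Let ρ : A → ⊕_{i=1}^n R[x_i] be the R-algebra homomorphism from the graded algebra A with generators f_i, h_i (i ∈ S), h_{S,j} (j ∉ S) given by ρ(f_i) = x_i², ρ(h_i) = x_i³, ρ(h_{S,j}) = x_j + Σ_{i∈S} a_{ij} x_i. Then the images under ρ of the elements f_i^m, f_i^m h_i (i ∈ S, m ≥ 0) and h_{S,j}^m (j ∉ S, m ≥ 1) are linearly independent over R in ⊕_{i=1}^n R[x_i]. -/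
open Polynomial

section Aux

variable {R : Type*} [CommRing R] {n : ℕ}

/-- The `R`-linear functional on `Fin n → R[X]` extracting the coefficient of degree `d`
in the `i`-th component. -/
noncomputable def cfn (R : Type*) [CommRing R] {n : ℕ} (i : Fin n) (d : ℕ) :
    (Fin n → Polynomial R) →ₗ[R] R :=
  (Polynomial.lcoeff R d).comp (LinearMap.proj i)

@[simp] lemma cfn_apply (i : Fin n) (d : ℕ) (p : Fin n → Polynomial R) :
    cfn R i d p = (p i).coeff d := rfl

end Aux

/-- Linear independence over `R` of the images under `ρ` of the elements
`f_i^m`, `f_i^m h_i` (for `i ∈ S`, `m ≥ 0`) and `h_{S,j}^m` (for `j ∉ S`, `m ≥ 1`)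
inside `⊕_{i=1}^n R[x_i]` (the product ring `Fin n → R[x]`), where
`f_i = x_i²`, `h_i = x_i³` (in the `i`-th component) and
`h_{S,j}` has `j`-th component `x_j`, `i`-th component `a_{ij} x_i` for `i ∈ S`, and `0`
elsewhere.  Linear independence is stated for the *set* of these elements. -/
theorem stmt0 (R : Type*) [CommRing R] (n : ℕ) (hn : 1 ≤ n)
    (S : Set (Fin n)) [DecidablePred (· ∈ S)] (a : Fin n → Fin n → R) :
    let f : Fin n → (Fin n → Polynomial R) := fun i => Pi.single i (X ^ 2)
    let h : Fin n → (Fin n → Polynomial R) := fun i => Pi.single i (X ^ 3)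
    let hS : Fin n → (Fin n → Polynomial R) := fun j =>
      fun i => if i = j then X else if i ∈ S then Polynomial.C (a i j) * X else 0
    let T : Set (Fin n → Polynomial R) :=
      {p | ∃ i ∈ S, ∃ m : ℕ, p = (f i) ^ m} ∪
      {p | ∃ i ∈ S, ∃ m : ℕ, p = (f i) ^ m * h i} ∪
      {p | ∃ j, j ∉ S ∧ ∃ m : ℕ, 1 ≤ m ∧ p = (hS j) ^ m}
    LinearIndependent R (fun t : T => (t : Fin n → Polynomial R)) := by
  intro f h hS T
  -- normalization of the elements
  have hf : ∀ (i : Fin n) (m : ℕ), 1 ≤ m →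
      f i ^ m = Pi.single i ((X : Polynomial R) ^ (2 * m)) := by
    intro i m hm
    funext k
    simp only [f, Pi.pow_apply, Pi.single_apply]
    by_cases hk : k = i
    · simp [hk, pow_mul]
    · simp [hk, zero_pow (by omega : m ≠ 0)]
  have hfh : ∀ (i : Fin n) (m : ℕ),
      f i ^ m * h i = Pi.single i ((X : Polynomial R) ^ (2 * m + 3)) := by
    intro i m
    funext k
    simp only [f, h, Pi.mul_apply, Pi.pow_apply, Pi.single_apply]
    by_cases hk : k = i
    · simp [hk, pow_add, pow_mul]
    · simp [hk]
  have hg : ∀ (j : Fin n) (m : ℕ), 1 ≤ m →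
      hS j ^ m = fun k => if k = j then (X : Polynomial R) ^ m
        else if k ∈ S then C (a k j ^ m) * X ^ m else 0 := by
    intro j m hm
    funext k
    simp only [hS, Pi.pow_apply]
    by_cases hk : k = j
    · rw [if_pos hk, if_pos hk]
    · rw [if_neg hk, if_neg hk]
      by_cases hkS : k ∈ S
      · rw [if_pos hkS, if_pos hkS, mul_pow, ← C_pow]
      · rw [if_neg hkS, if_neg hkS, zero_pow (by omega : m ≠ 0)]
  rw [linearIndependent_iff]
  intro l hl
  ext t
  simp only [Finsupp.coe_zero, Pi.zero_apply]
  -- main helper : a dual functional kills the coefficient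
  have main : ∀ (φ : (Fin n → Polynomial R) →ₗ[R] R), φ t.1 = 1 →
      (∀ t' : T, (t' : Fin n → Polynomial R) ≠ t.1 → φ t'.1 = 0) → l t = 0 := by
    intro φ h1 h0
    have h2 := congrArg φ hl
    rw [map_zero, Finsupp.apply_linearCombination, Finsupp.linearCombination_apply,
      Finsupp.sum] at h2
    rw [Finset.sum_eq_single t (fun t' _ hne => by
        simp only [Function.comp_apply] at *
        rw [h0 t' (fun hc => hne (Subtype.ext hc)), smul_zero])
      (fun hnt => by simp [Finsupp.notMem_support_iff.mp hnt])] at h2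
    simpa [h1] using h2
  -- canonical forms of elements of T
  have canon : ∀ q ∈ T, q = (1 : Fin n → Polynomial R) ∨
      (∃ i ∈ S, ∃ e : ℕ, 1 ≤ e ∧ q = Pi.single i ((X : Polynomial R) ^ e)) ∨
      (∃ j, j ∉ S ∧ ∃ m : ℕ, 1 ≤ m ∧ q = fun k => if k = j then (X : Polynomial R) ^ m
        else if k ∈ S then C (a k j ^ m) * X ^ m else 0) := by
    intro q hq
    simp only [T, Set.mem_union, Set.mem_setOf_eq] at hq
    rcases hq with (⟨i, hiS, m, rfl⟩ | ⟨i, hiS, m, rfl⟩) | ⟨j, hjS, m, hm, rfl⟩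
    · rcases Nat.eq_zero_or_pos m with rfl | hm
      · left; rw [pow_zero]
      · exact Or.inr (Or.inl ⟨i, hiS, 2 * m, by omega, hf i m hm⟩)
    · exact Or.inr (Or.inl ⟨i, hiS, 2 * m + 3, by omega, hfh i m⟩)
    · exact Or.inr (Or.inr ⟨j, hjS, m, hm, hg j m hm⟩)
  obtain ⟨p, hp⟩ := t
  rcases canon p hp with rfl | ⟨i, hiS, e, he, rfl⟩ | ⟨j, hjS, m, hm, rfl⟩
  · -- p = 1 : use the constant coefficient in component 0
    refine main (cfn R ⟨0, hn⟩ 0) ?_ ?_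
    · show ((1 : Fin n → Polynomial R) ⟨0, hn⟩).coeff 0 = 1
      simp
    · rintro ⟨q, hq⟩ hne
      replace hne : q ≠ (1 : Fin n → Polynomial R) := hne
      rcases canon q hq with rfl | ⟨i', hi'S, e', he', rfl⟩ | ⟨j', hj'S, m', hm', rfl⟩
      · exact absurd rfl hne
      · show (((Pi.single i' ((X : Polynomial R) ^ e') : Fin n → Polynomial R)) ⟨0, hn⟩).coeff 0 = 0
        rw [Pi.single_apply]
        split_ifs
        · rw [coeff_X_pow, if_neg (by omega)]
        · exact coeff_zero 0
      · show ((if (⟨0, hn⟩ : Fin n) = j' then (X : Polynomial R) ^ m'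
            else if (⟨0, hn⟩ : Fin n) ∈ S then C (a ⟨0, hn⟩ j' ^ m') * X ^ m' else 0).coeff 0) = 0
        split_ifs
        · rw [coeff_X_pow, if_neg (by omega)]
        · rw [coeff_C_mul, coeff_X_pow, if_neg (by omega), mul_zero]
        · exact coeff_zero 0
  · -- p = Pi.single i (X ^ e)
    set Jc : Finset (Fin n) := Finset.univ.filter (fun j : Fin n => j ∉ S) with hJcdef
    have hJc : ∀ j ∈ Jc, j ∉ S := by
      intro j hj
      simpa [hJcdef] using hj
    set φ : (Fin n → Polynomial R) →ₗ[R] R :=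
      cfn R i e - ∑ j ∈ Jc, a i j ^ e • cfn R j e with hφdef
    have φapp : ∀ q : Fin n → Polynomial R,
        φ q = (q i).coeff e - ∑ j ∈ Jc, a i j ^ e * (q j).coeff e := by
      intro q
      simp [hφdef, LinearMap.sub_apply, LinearMap.coe_sum, Finset.sum_apply,
        LinearMap.smul_apply, smul_eq_mul]
    refine main φ ?_ ?_
    · show φ (Pi.single i ((X : Polynomial R) ^ e)) = 1
      rw [φapp, Finset.sum_eq_zero, sub_zero, Pi.single_apply, if_pos rfl, coeff_X_pow_self]
      intro j hj
      rw [Pi.single_apply, if_neg (fun hji : j = i => hJc j hj (hji ▸ hiS)), coeff_zero, mul_zero]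
    · rintro ⟨q, hq⟩ hne
      replace hne : q ≠ Pi.single i ((X : Polynomial R) ^ e) := hne
      show φ q = 0
      rcases canon q hq with rfl | ⟨i', hi'S, e', he', rfl⟩ | ⟨j', hj'S, m', hm', rfl⟩
      · rw [φapp]
        simp only [Pi.one_apply, coeff_one]
        split_ifs with h0
        · exact absurd h0 (by omega)
        · simp
      · rw [φapp, Finset.sum_eq_zero, sub_zero, Pi.single_apply]
        · split_ifs with hii
          · rw [coeff_X_pow, if_neg]
            intro hee
            exact hne (by rw [hii, hee])
          · exact coeff_zero e
        · intro j hj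
          rw [Pi.single_apply, if_neg (fun hji : j = i' => hJc j hj (hji ▸ hi'S)), coeff_zero, mul_zero]
      · have hij' : i ≠ j' := fun hc => hj'S (hc ▸ hiS)
        rw [φapp, Finset.sum_eq_single j'
          (fun j hj hjj' => by
            rw [if_neg hjj', if_neg (hJc j hj), coeff_zero, mul_zero])
          (fun hc => absurd (Finset.mem_filter.mpr ⟨Finset.mem_univ j', hj'S⟩) hc)]
        rw [if_neg hij', if_pos hiS, if_pos rfl, coeff_C_mul, coeff_X_pow]
        by_cases hem : e = m'
        · subst hem; simp
        · simp [hem]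
  · -- p = hS j ^ m canonical form
    refine main (cfn R j m) ?_ ?_
    · show ((if j = j then (X : Polynomial R) ^ m
          else if j ∈ S then C (a j j ^ m) * X ^ m else 0).coeff m) = 1
      rw [if_pos rfl, coeff_X_pow_self]
    · rintro ⟨q, hq⟩ hne
      replace hne : q ≠ fun k => if k = j then (X : Polynomial R) ^ m
        else if k ∈ S then C (a k j ^ m) * X ^ m else 0 := hne
      rcases canon q hq with rfl | ⟨i', hi'S, e', he', rfl⟩ | ⟨j', hj'S, m', hm', rfl⟩
      · show ((1 : Fin n → Polynomial R) j).coeff m = 0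
        rw [Pi.one_apply, coeff_one, if_neg (by omega : ¬ m = 0)]
      · show (((Pi.single i' ((X : Polynomial R) ^ e') : Fin n → Polynomial R)) j).coeff m = 0
        rw [Pi.single_apply, if_neg (fun hc : j = i' => hjS (hc ▸ hi'S)), coeff_zero]
      · show ((if j = j' then (X : Polynomial R) ^ m'
            else if j ∈ S then C (a j j' ^ m') * X ^ m' else 0).coeff m) = 0
        by_cases hjj : j = j'
        · rw [if_pos hjj, coeff_X_pow, if_neg]
          intro hmm
          exact hne (by rw [hjj, hmm])
        · rw [if_neg hjj, if_neg hjS, coeff_zero]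
end

section
/- Let 1 → H → G → G' → 1 be an exact sequence of groups admitting a set-theoretic section s : G' → G of the projection p : G → G' with s(1) = 1. Suppose G acts on a set X, G' acts on a set X', and f : X → X' is equivariant with respect to p. Assume that: (1) there is a nice quotient (π_H : X → Q_H, σ_H, ρ_H) for the H-action on X; (2) there is a nice quotient (π' : X' → Q', σ', ρ') for the G'-action on X'; and (3) whenever x ∈ X and g ∈ G satisfy f(g·x) = f(x), there exists h ∈ H with g·x = h·x. Then there exists a nice quotient for the G-action on X. -/
/-!
Write `ν = s ∘ ρ' ∘ f`. Translating `x` by `(ν x)⁻¹` moves `f x` to the chosen representative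
`σ' (π' (f x))` of its `G'`-orbit, so the normal forms `(ν x)⁻¹ • x` of the points of one
`G`-orbit all have the same image under `f`, and by the fibre condition they lie in one `H`-orbit.
Hence `x ↦ π_H ((ν x)⁻¹ • x)` is `G`-invariant; it is a nice quotient onto the `q ∈ Q_H` with
`ν (σ_H q) = 1`.
-/

structure NiceQuotient (Γ Y Q : Type*) [Group Γ] [MulAction Γ Y] where
  π : Y → Q
  σ : Q → Y
  ρ : Y → Γ
  π_smul (g : Γ) (y : Y) : π (g • y) = π y
  π_σ (q : Q) : π (σ q) = q
  eq_ρ_smul_σ_π (y : Y) : y = ρ y • σ (π y)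
  ρ_σ (q : Q) : ρ (σ q) = 1

namespace NiceQuotient

section Normalizer

variable {Γ Y Q : Type*} [Group Γ] [MulAction Γ Y] {K : Subgroup Γ} (N : NiceQuotient K Y Q)

theorem apply_σ_π {α : Type*} {F : Y → α} (hF : ∀ (k : K) (y : Y), F (k • y) = F y) (y : Y) :
    F (N.σ (N.π y)) = F y := by
  conv_rhs => rw [N.eq_ρ_smul_σ_π y, hF]

def ofNormalizer {ν : Y → Γ} (hνK : ∀ (k : K) (y : Y), ν (k • y) = ν y)
    (hν_inv_smul : ∀ y, ν ((ν y)⁻¹ • y) = 1)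
    (hν_orbit : ∀ (g : Γ) (y : Y), ∃ k : K, (ν (g • y))⁻¹ • g • y = k • (ν y)⁻¹ • y) :
    NiceQuotient Γ Y {q : Q | ν (N.σ q) = 1} where
  π y := ⟨N.π ((ν y)⁻¹ • y), by rw [Set.mem_ofPred_eq, N.apply_σ_π hνK, hν_inv_smul]⟩
  σ q := N.σ q
  ρ y := ν y * N.ρ ((ν y)⁻¹ • y)
  π_smul g y := by
    obtain ⟨k, hk⟩ := hν_orbit g y
    ext
    simp only [smul_smul] at hk ⊢
    rw [hk, N.π_smul]
  π_σ q := by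
    ext
    simp only [Set.mem_ofPred_eq.mp q.2, inv_one, one_smul, N.π_σ]
  eq_ρ_smul_σ_π y := by
    rw [mul_smul, ← Subgroup.smul_def]
    exact (smul_inv_smul (ν y) y).symm.trans (congrArg _ (N.eq_ρ_smul_σ_π _))
  ρ_σ q := by
    simp only [Set.mem_ofPred_eq.mp q.2, inv_one, one_smul, N.ρ_σ, OneMemClass.coe_one, mul_one]

end Normalizer

section EquivariantMap

variable {G G' X X' Q Q' : Type*} [Group G] [Group G'] [MulAction G X] [MulAction G' X']
  {p : G →* G'} {f : X → X'} {s : G' → G} {π' : X' → Q'} {σ' : Q' → X'} {ρ' : X' → G'}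

theorem apply_inv_smul_eq_σ_π (hf : ∀ (g : G) (x : X), f (g • x) = p g • f x)
    (hs : ∀ g', p (s g') = g') (hdec' : ∀ x', x' = ρ' x' • σ' (π' x')) (x : X) :
    f ((s (ρ' (f x)))⁻¹ • x) = σ' (π' (f x)) := by
  rw [hf, map_inv, hs, inv_smul_eq_iff]
  exact hdec' (f x)

def ofEquivariantMap {K : Subgroup G} (N : NiceQuotient K X Q) (hK : K ≤ p.ker)
    (hf : ∀ (g : G) (x : X), f (g • x) = p g • f x)
    (hs : ∀ g', p (s g') = g') (hs1 : s 1 = 1)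
    (hπ' : ∀ (g' : G') (x' : X'), π' (g' • x') = π' x')
    (hdec' : ∀ x', x' = ρ' x' • σ' (π' x')) (hρσ' : ∀ q, ρ' (σ' q) = 1)
    (hfib : ∀ (x : X) (g : G), f (g • x) = f x → ∃ k : K, g • x = k • x) :
    NiceQuotient G X {q : Q | (s ∘ ρ' ∘ f) (N.σ q) = 1} :=
  have hf_inv_smul := apply_inv_smul_eq_σ_π hf hs hdec'
  N.ofNormalizer
    (fun k x => by
      simp only [Function.comp_apply, Subgroup.smul_def, hf, MonoidHom.mem_ker.mp (hK k.2),
        one_smul])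
    (fun x => by
      simp only [Function.comp_apply, hf_inv_smul, hρσ', hs1])
    (fun g x => by
      set ν := s ∘ ρ' ∘ f
      have hnormal : (ν (g • x))⁻¹ • g • x = ((ν (g • x))⁻¹ * g * ν x) • (ν x)⁻¹ • x := by
        simp only [smul_smul, mul_assoc, mul_inv_cancel, mul_one]
      have hf_eq : f (((ν (g • x))⁻¹ * g * ν x) • (ν x)⁻¹ • x) = f ((ν x)⁻¹ • x) := by
        rw [← hnormal]
        change f ((s (ρ' (f (g • x))))⁻¹ • g • x) = f ((s (ρ' (f x)))⁻¹ • x)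
        rw [hf_inv_smul, hf_inv_smul, hf, hπ']
      rw [hnormal]
      exact hfib _ _ hf_eq)

end EquivariantMap

end NiceQuotient

theorem stmt8_general {H G G' X X' QH Q' : Type*} [Group H] [Group G] [Group G']
    [MulAction G X] [MulAction G' X']
    (φ : H →* G) (p : G →* G')
    (hexact : ∀ g : G, g ∈ φ.range ↔ p g = 1)
    (s : G' → G) (hs : ∀ g' : G', p (s g') = g') (hs1 : s 1 = 1)
    (f : X → X') (hequiv : ∀ (g : G) (x : X), f (g • x) = p g • f x)
    (πH : X → QH) (σH : QH → X) (ρH : X → H)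
    (hπH : ∀ (h : H) (x : X), πH (φ h • x) = πH x)
    (hσH : ∀ q : QH, πH (σH q) = q)
    (hdecH : ∀ x : X, x = φ (ρH x) • σH (πH x))
    (hρσH : ∀ q : QH, ρH (σH q) = 1)
    (π' : X' → Q') (σ' : Q' → X') (ρ' : X' → G')
    (hπ' : ∀ (g' : G') (x' : X'), π' (g' • x') = π' x')
    (hdec' : ∀ x' : X', x' = ρ' x' • σ' (π' x'))
    (hρσ' : ∀ q : Q', ρ' (σ' q) = 1)
    (hfib : ∀ (x : X) (g : G), f (g • x) = f x → ∃ h : H, g • x = φ h • x) :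
    ∃ (Q : Set QH) (π : X → Q) (σ : Q → X) (ρ : X → G),
      (∀ (g : G) (x : X), π (g • x) = π x) ∧
      (∀ q : Q, π (σ q) = q) ∧
      (∀ x : X, x = ρ x • σ (π x)) ∧
      (∀ q : Q, ρ (σ q) = 1) := by
  let NH : NiceQuotient φ.range X QH :=
    { π := πH
      σ := σH
      ρ := fun x => φ.rangeRestrict (ρH x)
      π_smul := by
        rintro ⟨_, h, rfl⟩ x
        exact hπH h x
      π_σ := hσH
      eq_ρ_smul_σ_π := hdecH
      ρ_σ := fun q => by rw [hρσH, map_one] }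
  have hK : φ.range ≤ p.ker := fun g hg => (hexact g).1 hg
  have hfibK (x : X) (g : G) (hx : f (g • x) = f x) : ∃ k : φ.range, g • x = k • x := by
    obtain ⟨h, hh⟩ := hfib x g hx
    exact ⟨φ.rangeRestrict h, hh⟩
  let N := NH.ofEquivariantMap hK hequiv hs hs1 hπ' hdec' hρσ' hfibK
  exact ⟨_, N.π, N.σ, N.ρ, N.π_smul, N.π_σ, N.eq_ρ_smul_σ_π, N.ρ_σ⟩

/-- Relative construction of nice quotients.  Given an exact sequence of
groups `1 → H → G → G' → 1` (`φ : H → G` injective, `p : G → G'` surjective with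
`range φ = ker p`) admitting a set-theoretic section `s` of `p` with `s(1) = 1`, an
action of `G` on `X`, an action of `G'` on `X'`, a `p`-equivariant map `f : X → X'`,
nice quotients for the `H`-action on `X` and for the `G'`-action on `X'`, and such that
whenever `f(g•x) = f(x)` the elements `g•x` and `x` differ by the action of `H`,
there exists a nice quotient for the `G`-action on `X` (which may be taken to be a
subset of `Q_H`). -/
theorem stmt8 {H G G' X X' QH Q' : Type*} [Group H] [Group G] [Group G']
    [MulAction G X] [MulAction G' X']
    (φ : H →* G) (p : G →* G') (hφ : Function.Injective φ)
    (hp : Function.Surjective p) (hexact : ∀ g : G, g ∈ φ.range ↔ p g = 1)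
    (s : G' → G) (hs : ∀ g' : G', p (s g') = g') (hs1 : s 1 = 1)
    (f : X → X') (hequiv : ∀ (g : G) (x : X), f (g • x) = p g • f x)
    (πH : X → QH) (σH : QH → X) (ρH : X → H)
    (hπH : ∀ (h : H) (x : X), πH (φ h • x) = πH x)
    (hσH : ∀ q : QH, πH (σH q) = q)
    (hdecH : ∀ x : X, x = φ (ρH x) • σH (πH x))
    (hρσH : ∀ q : QH, ρH (σH q) = 1)
    (π' : X' → Q') (σ' : Q' → X') (ρ' : X' → G')
    (hπ' : ∀ (g' : G') (x' : X'), π' (g' • x') = π' x')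
    (hσ' : ∀ q : Q', π' (σ' q) = q)
    (hdec' : ∀ x' : X', x' = ρ' x' • σ' (π' x'))
    (hρσ' : ∀ q : Q', ρ' (σ' q) = 1)
    (hfib : ∀ (x : X) (g : G), f (g • x) = f x → ∃ h : H, g • x = φ h • x) :
    ∃ (Q : Set QH) (π : X → Q) (σ : Q → X) (ρ : X → G),
      (∀ (g : G) (x : X), π (g • x) = π x) ∧
      (∀ q : Q, π (σ q) = q) ∧
      (∀ x : X, x = ρ x • σ (π x)) ∧
      (∀ q : Q, ρ (σ q) = 1) :=
  stmt8_general φ p hexact s hs hs1 f hequiv πH σH ρH hπH hσH hdecH hρσH π' σ' ρ' hπ' hdec' hρσ'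
    hfib
end

section
/- Let u, v be nonnegative rationals with u + v > 1, and let A(u,v) ⊆ k[t₁,t₂,x,y,z] be the graded subspace whose n-th component is spanned by all monomials t₁^{nu} t₂^{nv} x^k y^l z^m with nu, nv ∈ ℤ_{≥0} and n(u+v−1) = 2k + 3l + 4m. Then the assignment sending such a monomial to x^k y^l z^m defines an isomorphism of graded algebras from A(u,v) onto the Veronese subalgebra of k[x,y,z] (with deg x = 2, deg y = 3, deg z = 4) consisting of all elements whose degree is a nonnegative integer multiple of n₀(u+v−1), where n₀ is the least positive integer with n₀u, n₀v, n₀(u+v−1)/1 giving integer exponents. -/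
/-! The monomials `x^K y^l z^m` are linearly independent, and the specialization `t₁, t₂ ↦ 1`
is injective on the generating monomials of `A(u,v)`: since `u + v ≠ 1`, the degree
`n = (2K + 3l + 4m)/(u + v − 1)`, and with it the `t`-exponents `nu, nv`, is determined by
`K, l, m`. Hence the specialization is injective on `A(u,v)` and maps its component of degree `n`
onto the Veronese component of degree `n(u + v − 1)`. The degrees `n` with `nu, nv` integral are
exactly the multiples of `n₀`, because they are closed under reduction modulo `n₀`. -/

open MvPolynomial

/-- The `n`-th graded component of `A(u,v)` inside `k[t₁,t₂,x,y,z]`: the `k`-span of the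
monomials `t₁^{nu} t₂^{nv} x^K y^l z^m` with `nu, nv ∈ ℤ_{≥0}` and
`n(u+v−1) = 2K + 3l + 4m`. -/
noncomputable def stmt10Acomp (k : Type*) [Field k] (u v : ℚ) (n : ℕ) :
    Submodule k (MvPolynomial (Fin 5) k) :=
  Submodule.span k
    {P | ∃ i j K l m : ℕ, (i : ℚ) = n * u ∧ (j : ℚ) = n * v ∧
      (n : ℚ) * (u + v - 1) = 2 * K + 3 * l + 4 * m ∧
      P = X 0 ^ i * X 1 ^ j * X 2 ^ K * X 3 ^ l * X 4 ^ m}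

/-- The span of the allowed monomials of all degrees `n` (the algebra `A(u,v)`). -/
noncomputable def stmt10A (k : Type*) [Field k] (u v : ℚ) :
    Submodule k (MvPolynomial (Fin 5) k) :=
  ⨆ n : ℕ, stmt10Acomp k u v n

/-- The graded component of degree `d ∈ ℚ` of `k[x,y,z]` with `deg x = 2`, `deg y = 3`,
`deg z = 4`: the span of the monomials `x^K y^l z^m` with `2K + 3l + 4m = d`. -/
noncomputable def stmt10Vcomp (k : Type*) [Field k] (d : ℚ) :
    Submodule k (MvPolynomial (Fin 3) k) :=
  Submodule.span k
    {P | ∃ K l m : ℕ, (2 * K + 3 * l + 4 * m : ℚ) = d ∧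
      P = X 0 ^ K * X 1 ^ l * X 2 ^ m}

/-- The Veronese subalgebra of `k[x,y,z]` (`deg x = 2, deg y = 3, deg z = 4`) consisting
of the components whose degree is a nonnegative integer multiple of `d`. -/
noncomputable def stmt10Ver (k : Type*) [Field k] (d : ℚ) :
    Submodule k (MvPolynomial (Fin 3) k) :=
  ⨆ c : ℕ, stmt10Vcomp k (c * d)

theorem LinearMap.injOn_span_of_linearIndepOn {R M N : Type*} [Ring R] [AddCommGroup M]
    [AddCommGroup N] [Module R M] [Module R N] (f : M →ₗ[R] N) {s : Set M}
    (hf : LinearIndepOn R f s) : Set.InjOn f (Submodule.span R s) := by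
  have hdisj := Submodule.range_ker_disjoint hf
  rw [Subtype.range_coe] at hdisj
  exact f.injOn_of_disjoint_ker le_rfl hdisj

namespace Stmt10

section Monomials

variable (R : Type*) [CommSemiring R]

theorem X_pow_mul_X_pow_mul_X_pow_eq_monomial (K l m : ℕ) :
    (X 0 ^ K * X 1 ^ l * X 2 ^ m : MvPolynomial (Fin 3) R) =
      monomial (Finsupp.single 0 K + Finsupp.single 1 l + Finsupp.single 2 m) 1 := by
  simp only [X_pow_eq_monomial, monomial_mul, mul_one]

theorem linearIndependent_X_pow_mul_X_pow_mul_X_pow :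
    LinearIndependent R
      (fun t : ℕ × ℕ × ℕ => (X 0 ^ t.1 * X 1 ^ t.2.1 * X 2 ^ t.2.2 : MvPolynomial (Fin 3) R)) := by
  have hexp : Function.Injective fun t : ℕ × ℕ × ℕ =>
      Finsupp.single (0 : Fin 3) t.1 + Finsupp.single 1 t.2.1 + Finsupp.single 2 t.2.2 := by
    rintro ⟨K, l, m⟩ ⟨K', l', m'⟩ h
    obtain rfl : K = K' := by simpa using DFunLike.congr_fun h 0
    obtain rfl : l = l' := by simpa using DFunLike.congr_fun h 1
    obtain rfl : m = m' := by simpa using DFunLike.congr_fun h 2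
    rfl
  convert (basisMonomials (Fin 3) R).linearIndependent.comp _ hexp using 1
  ext1 t
  simp [X_pow_mul_X_pow_mul_X_pow_eq_monomial]

noncomputable def forgetT : MvPolynomial (Fin 5) R →ₐ[R] MvPolynomial (Fin 3) R :=
  aeval ![1, 1, X 0, X 1, X 2]

@[simp]
theorem forgetT_X_pow_mul (i j K l m : ℕ) :
    forgetT R (X 0 ^ i * X 1 ^ j * X 2 ^ K * X 3 ^ l * X 4 ^ m) =
      X 0 ^ K * X 1 ^ l * X 2 ^ m := by
  simp [forgetT]

end Monomials

section Components

variable (k : Type*) [Field k] (u v : ℚ)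

def monomialsA (n : ℕ) : Set (MvPolynomial (Fin 5) k) :=
  {P | ∃ i j K l m : ℕ, (i : ℚ) = n * u ∧ (j : ℚ) = n * v ∧
    (n : ℚ) * (u + v - 1) = 2 * K + 3 * l + 4 * m ∧
    P = X 0 ^ i * X 1 ^ j * X 2 ^ K * X 3 ^ l * X 4 ^ m}

def monomialsV (d : ℚ) : Set (MvPolynomial (Fin 3) k) :=
  {P | ∃ K l m : ℕ, (2 * K + 3 * l + 4 * m : ℚ) = d ∧ P = X 0 ^ K * X 1 ^ l * X 2 ^ m}

theorem stmt10Acomp_eq_span (n : ℕ) :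
    stmt10Acomp k u v n = Submodule.span k (monomialsA k u v n) :=
  rfl

theorem stmt10A_eq_span : stmt10A k u v = Submodule.span k (⋃ n, monomialsA k u v n) :=
  (Submodule.span_iUnion _).symm

theorem stmt10Vcomp_eq_span (d : ℚ) : stmt10Vcomp k d = Submodule.span k (monomialsV k d) :=
  rfl

variable {u v}

theorem monomialsA_eq_empty {n : ℕ} (hn : ¬ ∃ i j : ℕ, (i : ℚ) = n * u ∧ (j : ℚ) = n * v) :
    monomialsA k u v n = ∅ :=
  Set.eq_empty_of_forall_notMem fun _ ⟨i, j, _, _, _, hi, hj, _⟩ => hn ⟨i, j, hi, hj⟩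

theorem image_forgetT_monomialsA {n : ℕ} (hn : ∃ i j : ℕ, (i : ℚ) = n * u ∧ (j : ℚ) = n * v) :
    forgetT k '' monomialsA k u v n = monomialsV k (n * (u + v - 1)) := by
  ext Q
  constructor
  · rintro ⟨P, ⟨i, j, K, l, m, -, -, hd, rfl⟩, rfl⟩
    exact ⟨K, l, m, hd.symm, forgetT_X_pow_mul k i j K l m⟩
  · rintro ⟨K, l, m, hd, rfl⟩
    obtain ⟨i, j, hi, hj⟩ := hn
    exact ⟨_, ⟨i, j, K, l, m, hi, hj, hd.symm, rfl⟩, forgetT_X_pow_mul k i j K l m⟩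

theorem injOn_forgetT_iUnion_monomialsA (huv : 1 < u + v) :
    Set.InjOn (forgetT k) (⋃ n, monomialsA k u v n) := by
  simp only [Set.InjOn, Set.mem_iUnion]
  rintro _ ⟨n, i, j, K, l, m, hi, hj, hd, rfl⟩ _ ⟨n', i', j', K', l', m', hi', hj', hd', rfl⟩ h
  simp only [forgetT_X_pow_mul] at h
  obtain ⟨rfl, rfl, rfl⟩ : K = K' ∧ l = l' ∧ m = m' := by
    simpa using (linearIndependent_X_pow_mul_X_pow_mul_X_pow k).injective
      (a₁ := (K, l, m)) (a₂ := (K', l', m')) h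
  have hn : (n : ℚ) = n' := mul_right_cancel₀ (by linarith : u + v - 1 ≠ 0) (hd.trans hd'.symm)
  obtain rfl : i = i' := by exact_mod_cast (hi.trans (hn ▸ hi'.symm))
  obtain rfl : j = j' := by exact_mod_cast (hj.trans (hn ▸ hj'.symm))
  rfl

theorem linearIndepOn_forgetT_iUnion_monomialsA (huv : 1 < u + v) :
    LinearIndepOn k (forgetT k) (⋃ n, monomialsA k u v n) := by
  have hli := linearIndependent_X_pow_mul_X_pow_mul_X_pow k
  refine (linearIndepOn_iff_image (injOn_forgetT_iUnion_monomialsA k huv)).2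
    (((linearIndepOn_id_range_iff hli.injective).2 hli).mono ?_)
  rintro _ ⟨_, hP, rfl⟩
  obtain ⟨n, i, j, K, l, m, -, -, -, rfl⟩ := Set.mem_iUnion.1 hP
  exact ⟨(K, l, m), (forgetT_X_pow_mul k i j K l m).symm⟩

theorem injOn_forgetT_stmt10A (huv : 1 < u + v) :
    Set.InjOn (forgetT k) (stmt10A k u v) := by
  rw [stmt10A_eq_span]
  exact (forgetT k).toLinearMap.injOn_span_of_linearIndepOn
    (linearIndepOn_forgetT_iUnion_monomialsA k huv)

theorem map_forgetT_stmt10Acomp {n : ℕ} (hn : ∃ i j : ℕ, (i : ℚ) = n * u ∧ (j : ℚ) = n * v) :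
    (stmt10Acomp k u v n).map (forgetT k).toLinearMap = stmt10Vcomp k (n * (u + v - 1)) := by
  rw [stmt10Acomp_eq_span, Submodule.map_span, AlgHom.coe_toLinearMap,
    image_forgetT_monomialsA k hn, stmt10Vcomp_eq_span]

end Components

theorem exists_natCast_eq_mod_mul {q : ℚ} (hq : 0 ≤ q) {n₀ n : ℕ}
    (h₀ : ∃ i : ℕ, (i : ℚ) = n₀ * q) (h : ∃ i : ℕ, (i : ℚ) = n * q) :
    ∃ i : ℕ, (i : ℚ) = (n % n₀ : ℕ) * q := by
  obtain ⟨i₀, hi₀⟩ := h₀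
  obtain ⟨i, hi⟩ := h
  have hn : (n : ℚ) = (n / n₀ : ℕ) * n₀ + (n % n₀ : ℕ) := by
    exact_mod_cast (Nat.div_add_mod' n n₀).symm
  have hle : ((n / n₀ * i₀ : ℕ) : ℚ) ≤ i := by
    rw [Nat.cast_mul, hi₀, hi, hn]
    nlinarith [mul_nonneg (Nat.cast_nonneg (n % n₀)) hq]
  refine ⟨i - n / n₀ * i₀, ?_⟩
  rw [Nat.cast_sub (by exact_mod_cast hle), Nat.cast_mul, hi₀, hi, hn]
  ring

theorem minimal_scale_dvd {u v : ℚ} (hu : 0 ≤ u) (hv : 0 ≤ v) {n₀ : ℕ} (hn₀pos : 0 < n₀)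
    (hn₀int : ∃ i j : ℕ, (i : ℚ) = n₀ * u ∧ (j : ℚ) = n₀ * v)
    (hn₀min : ∀ n : ℕ, 0 < n → (∃ i j : ℕ, (i : ℚ) = n * u ∧ (j : ℚ) = n * v) → n₀ ≤ n)
    {n : ℕ} (hn : ∃ i j : ℕ, (i : ℚ) = n * u ∧ (j : ℚ) = n * v) : n₀ ∣ n := by
  refine Nat.dvd_of_mod_eq_zero (Nat.eq_zero_of_not_pos fun hr => ?_)
  obtain ⟨i₀, j₀, hi₀, hj₀⟩ := hn₀int
  obtain ⟨i, j, hi, hj⟩ := hn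
  obtain ⟨i', hi'⟩ := exists_natCast_eq_mod_mul hu ⟨i₀, hi₀⟩ ⟨i, hi⟩
  obtain ⟨j', hj'⟩ := exists_natCast_eq_mod_mul hv ⟨j₀, hj₀⟩ ⟨j, hj⟩
  exact (hn₀min _ hr ⟨i', j', hi', hj'⟩).not_gt (Nat.mod_lt n hn₀pos)

theorem map_forgetT_stmt10A (k : Type*) [Field k] {u v : ℚ} (hu : 0 ≤ u) (hv : 0 ≤ v)
    {n₀ : ℕ} (hn₀pos : 0 < n₀) (hn₀int : ∃ i j : ℕ, (i : ℚ) = n₀ * u ∧ (j : ℚ) = n₀ * v)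
    (hn₀min : ∀ n : ℕ, 0 < n → (∃ i j : ℕ, (i : ℚ) = n * u ∧ (j : ℚ) = n * v) → n₀ ≤ n) :
    (stmt10A k u v).map (forgetT k).toLinearMap = stmt10Ver k (n₀ * (u + v - 1)) := by
  have hdeg (c : ℕ) : ((n₀ * c : ℕ) : ℚ) * (u + v - 1) = c * (n₀ * (u + v - 1)) := by
    push_cast; ring
  rw [stmt10A, Submodule.map_iSup, stmt10Ver]
  refine le_antisymm (iSup_le fun n => ?_) (iSup_le fun c => ?_)
  · by_cases hn : ∃ i j : ℕ, (i : ℚ) = n * u ∧ (j : ℚ) = n * v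
    · obtain ⟨c, rfl⟩ := minimal_scale_dvd hu hv hn₀pos hn₀int hn₀min hn
      rw [map_forgetT_stmt10Acomp k hn, hdeg]
      exact le_iSup (fun c : ℕ => stmt10Vcomp k (c * (n₀ * (u + v - 1)))) c
    · rw [stmt10Acomp_eq_span, monomialsA_eq_empty k hn, Submodule.span_empty, Submodule.map_bot]
      exact bot_le
  · obtain ⟨i₀, j₀, hi₀, hj₀⟩ := hn₀int
    have hint : ∃ i j : ℕ, (i : ℚ) = (n₀ * c : ℕ) * u ∧ (j : ℚ) = (n₀ * c : ℕ) * v :=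
      ⟨i₀ * c, j₀ * c, by push_cast; rw [hi₀]; ring, by push_cast; rw [hj₀]; ring⟩
    rw [← hdeg, ← map_forgetT_stmt10Acomp k hint]
    exact le_iSup (fun n => (stmt10Acomp k u v n).map (forgetT k).toLinearMap) (n₀ * c)

end Stmt10

/-- For nonnegative rationals `u, v` with `u + v > 1`, the algebra map
`Φ : k[t₁,t₂,x,y,z] → k[x,y,z]`, `t₁, t₂ ↦ 1`, `x,y,z ↦ x,y,z` (which on the allowed
monomials is exactly `t₁^{nu} t₂^{nv} x^K y^l z^m ↦ x^K y^l z^m`) restricts to an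
isomorphism of graded algebras from `A(u,v)` onto the Veronese subalgebra of `k[x,y,z]`
in degrees divisible by `n₀(u+v−1)`, where `n₀` is the least positive integer such that
`n₀u, n₀v` are (nonnegative) integers: `Φ` is injective on `A(u,v)`, maps the component
of degree `n` (when `nu, nv` are integral) onto the Veronese component of degree
`n(u+v−1)`, and maps `A(u,v)` onto the whole Veronese subalgebra. -/
theorem stmt10 (k : Type*) [Field k] (u v : ℚ) (hu : 0 ≤ u) (hv : 0 ≤ v)
    (huv : 1 < u + v) (n₀ : ℕ) (hn₀pos : 0 < n₀)
    (hn₀int : ∃ i j : ℕ, (i : ℚ) = n₀ * u ∧ (j : ℚ) = n₀ * v)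
    (hn₀min : ∀ n : ℕ, 0 < n → (∃ i j : ℕ, (i : ℚ) = n * u ∧ (j : ℚ) = n * v) → n₀ ≤ n) :
    let Φ : MvPolynomial (Fin 5) k →ₐ[k] MvPolynomial (Fin 3) k :=
      aeval ![1, 1, X 0, X 1, X 2]
    Set.InjOn Φ (stmt10A k u v : Set (MvPolynomial (Fin 5) k)) ∧
      (∀ n : ℕ, (∃ i j : ℕ, (i : ℚ) = n * u ∧ (j : ℚ) = n * v) →
        Submodule.map Φ.toLinearMap (stmt10Acomp k u v n) =
          stmt10Vcomp k ((n : ℚ) * (u + v - 1))) ∧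
      Submodule.map Φ.toLinearMap (stmt10A k u v) =
        stmt10Ver k ((n₀ : ℚ) * (u + v - 1)) := by
  intro Φ
  exact ⟨Stmt10.injOn_forgetT_stmt10A k huv, fun n hn => Stmt10.map_forgetT_stmt10Acomp k hn,
    Stmt10.map_forgetT_stmt10A k hu hv hn₀pos hn₀int hn₀min⟩
end
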